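/- For every k \ge 2 and 0 < p \le 1/4 there exist nonnegative reals c_1, \dots, c_k with: (i) for all 1 \le j \le k, the j-th elementary symmetric polynomial e_j(c_1,\dots,c_k) = p^{\binom{j}{2}}/j!, and (ii) \max_i c_i \ge 3/4. -/

import Mathlib

/-!
Write `a_i = p^(i choose 2)/i!` for the coefficients of `f_{p,k}`. Its roots are real, negative
and simple: at the points `-x_j` (`x_0 = 0`, `x_1 = 4/3`, `x_j = 2j/p^(j-1)` for `j ≥ 2`) the
sign of `f_{p,k}(-x_j)` is `(-1)^j`, because the terms `a_i x_j^i` increase up to `i = j`,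
decrease from `i = j + 1` on, and `a_{j-1} x_j^(j-1) + a_{j+1} x_j^(j+1) < a_j x_j^j`; so the
alternating sums on either side of the `j`-th term are smaller than it. With `r_i` the roots,
`f_{p,k}(0) = 1` forces `f_{p,k} = ∏ (1 + c_i X)` for `c_i = -1/r_i`, and comparing coefficients
gives `e_j(c) = a_j`. The root in `(-4/3, 0)` gives a weight at least `3/4`.
-/
open Polynomial Finset
open scoped Nat

noncomputable def deformedExpCoeff (p : ℝ) (i : ℕ) : ℝ := p ^ i.choose 2 / i !

noncomputable def truncDeformedExp (p : ℝ) (k : ℕ) : ℝ[X] :=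
  ∑ i ∈ range (k + 1), C (deformedExpCoeff p i) * X ^ i

lemma deformedExpCoeff_pos {p : ℝ} (hp : 0 < p) (i : ℕ) : 0 < deformedExpCoeff p i := by
  unfold deformedExpCoeff; positivity

lemma deformedExpCoeff_succ (p : ℝ) (i : ℕ) :
    deformedExpCoeff p (i + 1) = deformedExpCoeff p i * (p ^ i / (i + 1)) := by
  rw [deformedExpCoeff, deformedExpCoeff, Nat.choose_succ_succ', Nat.choose_one_right,
    Nat.factorial_succ, pow_add]
  push_cast
  field_simp

lemma coeff_truncDeformedExp (p : ℝ) (k j : ℕ) :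
    (truncDeformedExp p k).coeff j = if j ≤ k then deformedExpCoeff p j else 0 := by
  simp [truncDeformedExp, finsetSum_coeff]

lemma natDegree_truncDeformedExp_le (p : ℝ) (k : ℕ) : (truncDeformedExp p k).natDegree ≤ k :=
  natDegree_le_iff_coeff_eq_zero.2 fun j hj => by
    rw [coeff_truncDeformedExp, if_neg (not_le.2 hj)]

lemma eval_zero_truncDeformedExp (p : ℝ) (k : ℕ) : (truncDeformedExp p k).eval 0 = 1 := by
  simp [← coeff_zero_eq_eval_zero, coeff_truncDeformedExp, deformedExpCoeff]

lemma eval_neg_truncDeformedExp (p x : ℝ) (k : ℕ) : (truncDeformedExp p k).eval (-x) =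
    ∑ i ∈ range (k + 1), (-1) ^ i * (deformedExpCoeff p i * x ^ i) := by
  simp only [truncDeformedExp, eval_finsetSum, eval_mul, eval_C, eval_pow, eval_X]
  exact sum_congr rfl fun i _ => by rw [neg_pow]; ring

lemma neg_one_pow_mul_neg_one_pow_add {R : Type*} [Monoid R] [HasDistribNeg R] (a b : ℕ) :
    (-1 : R) ^ a * (-1) ^ (a + b) = (-1) ^ b := by
  rw [pow_add, ← mul_assoc, ← pow_add, ← two_mul, pow_mul, neg_one_sq, one_pow, one_mul]

section AlternatingSum

variable {R : Type*} [CommRing R] [LinearOrder R] [IsStrictOrderedRing R]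

lemma alternating_sum_range_mem_Icc {g : ℕ → R} (hg : Antitone g) (hg0 : ∀ i, 0 ≤ g i)
    (n : ℕ) :
    ∑ i ∈ range n, (-1) ^ i * g i ∈ Set.Icc 0 (g 0) := by
  induction n generalizing g with
  | zero => simpa using hg0 0
  | succ n ih =>
    obtain ⟨h0, h1⟩ := ih (g := fun i => g (i + 1)) (hg.comp_monotone fun _ _ h => by omega)
      fun i => hg0 _
    have hshift : ∑ i ∈ range (n + 1), (-1) ^ i * g i
        = g 0 - ∑ i ∈ range n, (-1) ^ i * g (i + 1) := by
      simp [sum_range_succ', pow_succ, sub_eq_neg_add, ← sum_neg_distrib]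
    rw [hshift]
    constructor <;> linarith [hg (Nat.zero_le 1)]

lemma neg_one_pow_mul_alternating_sum_pos {g : ℕ → R} {m k : ℕ} (hg0 : ∀ i, 0 ≤ g i)
    (hmono : ∀ i < m, g i ≤ g (i + 1)) (hanti : ∀ i, m + 2 ≤ i → g (i + 1) ≤ g i)
    (hdom : g m + g (m + 2) < g (m + 1)) (hk : m + 1 ≤ k) :
    0 < (-1) ^ (m + 1) * ∑ i ∈ range (k + 1), (-1) ^ i * g i := by
  obtain ⟨n, rfl⟩ : ∃ n, k = m + 1 + n := ⟨k - (m + 1), by omega⟩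
  -- the sum is `g (m + 1)` minus the alternating sums read downwards from `g m`
  -- and upwards from `g (m + 2)`
  have hlow : ∑ i ∈ range (m + 1), (-1) ^ i * g (m - i) ∈ Set.Icc 0 (g m) :=
    alternating_sum_range_mem_Icc (antitone_nat_of_succ_le fun i => by
      rcases lt_or_ge i m with hi | hi
      · simpa [show m - i = m - (i + 1) + 1 by omega] using hmono _ (by omega)
      · simp [show m - i = 0 by omega, show m - (i + 1) = 0 by omega]) (fun _ => hg0 _) _
  have hup : ∑ i ∈ range n, (-1) ^ i * g (m + 2 + i) ∈ Set.Icc 0 (g (m + 2)) :=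
    alternating_sum_range_mem_Icc (g := fun i => g (m + 2 + i))
      (antitone_nat_of_succ_le fun i => hanti (m + 2 + i) (by omega)) (fun _ => hg0 _) _
  have hlow_eq : (-1) ^ (m + 1) * ∑ i ∈ range (m + 1), (-1) ^ i * g i
      = -∑ i ∈ range (m + 1), (-1) ^ i * g (m - i) := by
    rw [← sum_range_reflect, mul_sum, ← sum_neg_distrib]
    refine sum_congr rfl fun i hi => ?_
    obtain ⟨d, rfl⟩ : ∃ d, m = i + d := ⟨m - i, by simp at hi; omega⟩
    rw [show i + d + 1 - 1 - i = d by omega, show i + d - i = d by omega,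
      show i + d + 1 = d + (i + 1) by omega, ← mul_assoc, mul_comm ((-1 : R) ^ (d + (i + 1))),
      neg_one_pow_mul_neg_one_pow_add, pow_succ]
    ring
  have hup_eq : (-1) ^ (m + 1) * ∑ i ∈ range n, (-1) ^ (m + 1 + (i + 1)) * g (m + 1 + (i + 1))
      = -∑ i ∈ range n, (-1) ^ i * g (m + 2 + i) := by
    rw [mul_sum, ← sum_neg_distrib]
    refine sum_congr rfl fun i _ => ?_
    rw [← mul_assoc, neg_one_pow_mul_neg_one_pow_add, show m + 1 + (i + 1) = m + 2 + i by omega,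
      pow_succ]
    ring
  rw [show m + 1 + n + 1 = (m + 1) + (n + 1) by omega, sum_range_add,
    sum_range_succ' (fun i => (-1 : R) ^ (m + 1 + i) * g (m + 1 + i)) n,
    mul_add, mul_add, hlow_eq, hup_eq, add_zero,
    ← mul_assoc, ← pow_add, Even.neg_one_pow ⟨m + 1, rfl⟩, one_mul]
  simp only [Set.mem_Icc] at hlow hup
  linarith

end AlternatingSum

-- `x * p ^ i / (i + 1)` is the ratio `a_(i+1) x^(i+1) / (a_i x^i)` of consecutive terms.
lemma neg_one_pow_mul_eval_neg_pos_of_ratio {p x : ℝ} (hp : 0 < p) (hx : 0 < x) {m k : ℕ}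
    (hk : m + 1 ≤ k) (hmono : ∀ i < m, (i : ℝ) + 1 ≤ x * p ^ i)
    (hanti : ∀ i, m + 2 ≤ i → x * p ^ i ≤ i + 1)
    (hdom : (m + 1) / (x * p ^ m) + x * p ^ (m + 1) / (m + 2) < 1) :
    0 < (-1) ^ (m + 1) * (truncDeformedExp p k).eval (-x) := by
  set g : ℕ → ℝ := fun i => deformedExpCoeff p i * x ^ i
  have hg : ∀ i, 0 < g i := fun i => mul_pos (deformedExpCoeff_pos hp i) (pow_pos hx i)
  have hstep : ∀ i : ℕ, g (i + 1) = g i * (x * p ^ i / (i + 1)) := fun i => by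
    simp only [g, deformedExpCoeff_succ, pow_succ]; ring
  rw [eval_neg_truncDeformedExp]
  refine neg_one_pow_mul_alternating_sum_pos (g := g) (fun i => (hg i).le) (fun i hi => ?_)
    (fun i hi => ?_) ?_ hk
  · rw [hstep]
    exact le_mul_of_one_le_right (hg i).le ((one_le_div (by positivity)).2 (hmono i hi))
  · rw [hstep]
    exact mul_le_of_le_one_right (hg i).le ((div_le_one (by positivity)).2 (hanti i hi))
  · have hsplit : g m + g (m + 2)
        = g (m + 1) * ((m + 1) / (x * p ^ m) + x * p ^ (m + 1) / (m + 2)) := by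
      rw [hstep (m + 1), hstep m]
      push_cast
      field_simp
      ring
    rw [hsplit]
    exact mul_lt_of_lt_one_right (hg _) hdom

lemma neg_one_pow_succ_mul_eval_neg_two_mul_div_pos {p : ℝ} (hp : 0 < p) (hp4 : p ≤ 1 / 4)
    {m k : ℕ} (hk : m + 1 ≤ k) :
    0 < (-1) ^ (m + 1) * (truncDeformedExp p k).eval (-(2 * (m + 1) / p ^ m)) := by
  have hp1 : p ≤ 1 := by linarith
  set x : ℝ := 2 * (m + 1) / p ^ m
  have hxp : x * p ^ m = 2 * (m + 1) := div_mul_cancel₀ _ (pow_ne_zero _ hp.ne')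
  refine neg_one_pow_mul_eval_neg_pos_of_ratio hp (by positivity) hk (fun i hi => ?_)
    (fun i hi => ?_) ?_
  · have hi' : (i : ℝ) < m := by exact_mod_cast hi
    calc (i : ℝ) + 1 ≤ x * p ^ m := by linarith
      _ ≤ x * p ^ i :=
          mul_le_mul_of_nonneg_left (pow_le_pow_of_le_one hp.le hp1 hi.le) (by positivity)
  · have hi' : (m : ℝ) + 2 ≤ i := by exact_mod_cast hi
    calc x * p ^ i ≤ x * p ^ (m + 2) :=
          mul_le_mul_of_nonneg_left (pow_le_pow_of_le_one hp.le hp1 hi) (by positivity)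
      _ = 2 * (m + 1) * p ^ 2 := by rw [pow_add, ← mul_assoc, hxp]
      _ ≤ i + 1 := by
        nlinarith [mul_le_mul_of_nonneg_left hp4 (by positivity : (0 : ℝ) ≤ m + 1)]
  · rw [hxp, pow_succ, ← mul_assoc, hxp, div_add_div _ _ (by positivity) (by positivity),
      div_lt_one (by positivity)]
    nlinarith [mul_le_mul_of_nonneg_left hp4 (sq_nonneg ((m : ℝ) + 1))]

-- `4/3` rather than `2`, the value of the general formula at `1`, is what yields a weight `≥ 3/4`.
noncomputable def samplePoint (p : ℝ) : ℕ → ℝ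
  | 0 => 0
  | 1 => 4 / 3
  | m + 2 => 2 * (m + 2) / p ^ (m + 1)

lemma samplePoint_strictMono {p : ℝ} (hp : 0 < p) (hp4 : p ≤ 1 / 4) :
    StrictMono (samplePoint p) := by
  refine strictMono_nat_of_lt_succ fun n => ?_
  match n with
  | 0 => norm_num [samplePoint]
  | 1 =>
    norm_num [samplePoint, lt_div_iff₀ hp]
    linarith
  | m + 2 =>
    simp only [samplePoint]
    rw [div_lt_div_iff₀ (by positivity) (by positivity), pow_succ p (m + 1)]
    push_cast
    have hq : 0 < 2 * ((m : ℝ) + 2) * p ^ (m + 1) := by positivity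
    nlinarith [mul_le_mul_of_nonneg_left hp4 hq.le]

lemma neg_one_pow_mul_eval_neg_samplePoint_pos {p : ℝ} (hp : 0 < p) (hp4 : p ≤ 1 / 4)
    {j k : ℕ} (hj : j ≤ k) :
    0 < (-1) ^ j * (truncDeformedExp p k).eval (-samplePoint p j) := by
  match j with
  | 0 => simp [samplePoint, eval_zero_truncDeformedExp]
  | 1 =>
    refine neg_one_pow_mul_eval_neg_pos_of_ratio (m := 0) hp (by norm_num [samplePoint]) hj
      (by simp) (fun i hi => ?_) ?_
    · have : p ^ i ≤ 1 := pow_le_one₀ hp.le (by linarith)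
      have : (2 : ℝ) ≤ i := by exact_mod_cast hi
      simp only [samplePoint]
      linarith
    · norm_num [samplePoint]
      linarith
  | m + 2 =>
    have := neg_one_pow_succ_mul_eval_neg_two_mul_div_pos hp hp4 (m := m + 1) hj
    simpa [samplePoint, add_assoc, one_add_one_eq_two] using this

lemma exists_isRoot_mem_Ioo_of_neg_one_pow_mul_pos {f : ℝ[X]} {a b : ℝ} (hab : a ≤ b)
    (n : ℕ) (ha : 0 < (-1) ^ (n + 1) * f.eval a) (hb : 0 < (-1) ^ n * f.eval b) :
    ∃ r ∈ Set.Ioo a b, f.IsRoot r := by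
  have hf : ContinuousOn (fun x => f.eval x) (Set.Icc a b) := f.continuousOn
  rcases neg_one_pow_eq_or ℝ n with h | h <;> simp only [pow_succ, h] at ha hb
  · exact intermediate_value_Ioo hab hf ⟨by linarith, by linarith⟩
  · exact intermediate_value_Ioo' hab hf ⟨by linarith, by linarith⟩

theorem coeff_prod_one_add_C_mul_X {R ι : Type*} [CommRing R] (s : Finset ι) (c : ι → R)
    (j : ℕ) :
    (∏ i ∈ s, (1 + C (c i) * X)).coeff j = ∑ A ∈ s.powersetCard j, ∏ i ∈ A, c i := by
  classical
  simp_rw [add_comm (1 : R[X]), prod_add, prod_const_one, mul_one, prod_mul_distrib, prod_const,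
    ← map_prod, finsetSum_coeff, coeff_C_mul_X_pow, powersetCard_eq_filter, sum_filter, eq_comm]

theorem eq_prod_one_sub_C_inv_mul_X_of_isRoot {K ι : Type*} [Field K] [Fintype ι] {f : K[X]}
    {r : ι → K} (hdeg : f.natDegree ≤ Fintype.card ι) (hr : Function.Injective r)
    (hroot : ∀ i, f.IsRoot (r i)) (h0 : f.eval 0 = 1) :
    f = ∏ i, (1 - C (r i)⁻¹ * X) := by
  classical
  have hr0 : ∀ i, r i ≠ 0 := fun i h => by simpa [h, h0] using (hroot i).eq_zero
  have hcard : #(insert 0 (univ.image r)) = Fintype.card ι + 1 := by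
    rw [card_insert_of_notMem (by simpa using hr0),
      card_image_of_injective _ hr, card_univ]
  refine eq_of_degrees_lt_of_eval_finset_eq (insert 0 (univ.image r)) ?_ ?_ ?_
  · rw [hcard]
    exact (degree_le_of_natDegree_le hdeg).trans_lt (by exact_mod_cast Nat.lt_succ_self _)
  · rw [hcard]
    refine (degree_le_of_natDegree_le ((natDegree_prod_le _ _).trans ?_)).trans_lt
      (by exact_mod_cast Nat.lt_succ_self _)
    calc ∑ i, (1 - C (r i)⁻¹ * X).natDegree ≤ ∑ _i : ι, 1 := by
          gcongr; compute_degree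
      _ = Fintype.card ι := by simp
  · intro x hx
    rcases mem_insert.1 hx with rfl | hx
    · simp [h0, eval_prod]
    · obtain ⟨i, -, rfl⟩ := mem_image.1 hx
      rw [(hroot i).eq_zero, eval_prod, prod_eq_zero (mem_univ i) (by simp [hr0 i])]

lemma exists_strictAnti_isRoot_truncDeformedExp {p : ℝ} (hp : 0 < p) (hp4 : p ≤ 1 / 4)
    (k : ℕ) :
    ∃ r : Fin k → ℝ, StrictAnti r ∧ (∀ i, (truncDeformedExp p k).IsRoot (r i)) ∧
      ∀ i : Fin k, r i ∈ Set.Ioo (-samplePoint p (i + 1)) (-samplePoint p i) := by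
  have hsample := samplePoint_strictMono hp hp4
  have hsign (j : ℕ) (hj : j ≤ k) := neg_one_pow_mul_eval_neg_samplePoint_pos hp hp4 hj
  have hroots (i : Fin k) : ∃ r ∈ Set.Ioo (-samplePoint p (i + 1)) (-samplePoint p i),
      (truncDeformedExp p k).IsRoot r :=
    exists_isRoot_mem_Ioo_of_neg_one_pow_mul_pos (neg_le_neg (hsample.monotone i.val.le_succ)) i
      (hsign _ i.isLt) (hsign _ i.isLt.le)
  choose r hr_mem hr_root using hroots
  refine ⟨r, fun i i' h => ?_, hr_root, hr_mem⟩
  calc r i' < -samplePoint p i' := (hr_mem i').2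
    _ ≤ -samplePoint p (i + 1) := neg_le_neg (hsample.monotone h)
    _ < r i := (hr_mem i).1

/-- For every `k ≥ 2` and `0 < p ≤ 1/4` there exist nonnegative reals
`c_1, …, c_k` whose `j`-th elementary symmetric polynomial equals
`p^(C(j,2))/j!` for `1 ≤ j ≤ k`, and with `max c_i ≥ 3/4`. -/
theorem exists_good_weights (k : ℕ) (hk : 2 ≤ k) (p : ℝ) (hp : 0 < p)
    (hp4 : p ≤ 1 / 4) :
    ∃ c : Fin k → ℝ, (∀ i, 0 ≤ c i) ∧
      (∀ j, 1 ≤ j → j ≤ k →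
        ∑ A ∈ Finset.powersetCard j (Finset.univ : Finset (Fin k)), ∏ i ∈ A, c i =
          p ^ (j.choose 2) / (j.factorial : ℝ)) ∧
      ∃ i, 3 / 4 ≤ c i := by
  obtain ⟨r, hr_anti, hr_root, hr_mem⟩ := exists_strictAnti_isRoot_truncDeformedExp hp hp4 k
  have hr_neg (i : Fin k) : r i < 0 := (hr_mem i).2.trans_le
    (neg_nonpos.2 ((samplePoint_strictMono hp hp4).monotone i.val.zero_le))
  have hfactor : truncDeformedExp p k = ∏ i, (1 + C (-(r i)⁻¹) * X) := by
    rw [eq_prod_one_sub_C_inv_mul_X_of_isRoot (by simpa using natDegree_truncDeformedExp_le p k)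
      hr_anti.injective hr_root (eval_zero_truncDeformedExp p k)]
    simp [sub_eq_add_neg]
  refine ⟨fun i => -(r i)⁻¹, fun i => neg_nonneg.2 (inv_nonpos.2 (hr_neg i).le),
    fun j _ hjk => ?_, ⟨0, by omega⟩, ?_⟩
  · rw [← coeff_prod_one_add_C_mul_X, ← hfactor, coeff_truncDeformedExp, if_pos hjk]
    rfl
  · have hr0 : -(4 / 3) < r ⟨0, by omega⟩ := by
      simpa [samplePoint] using (hr_mem ⟨0, by omega⟩).1
    calc (3 / 4 : ℝ) = (4 / 3)⁻¹ := by norm_num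
      _ ≤ (-r ⟨0, by omega⟩)⁻¹ :=
        inv_anti₀ (by linarith [hr_neg ⟨0, by omega⟩]) (by linarith)
      _ = -(r ⟨0, by omega⟩)⁻¹ := inv_neg
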